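/- The map v : (0,1)² → (0,1)² given by v(r,s) = (rs, r(1−s)/(1−rs)) is well defined (its values lie in (0,1)²) and makes (0,1) a tricocycloid in the cartesian symmetric monoidal category of sets: for all r, s, t ∈ (0,1), ((v×1)∘(1×σ)∘(v×1))(r,s,t) = ((1×v)∘(v×1)∘(1×v))(r,s,t), where σ(x,y) = (y,x); explicitly, both sides equal (rst, rs(1−t)/(1−rst), r(1−s)/(1−rs)). -/

import Mathlib

/-- The open unit interval `(0,1) ⊂ ℝ`. -/
def UI : Type := {r : ℝ // 0 < r ∧ r < 1}

/-- The Giry tricocycloid map `v : (0,1)² → (0,1)²`, `v(r,s) = (rs, r(1−s)/(1−rs))`;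
its well-definedness (values lie in `(0,1)²`) is witnessed by the proofs below. -/
noncomputable def giryV (p : UI × UI) : UI × UI :=
  ⟨⟨p.1.1 * p.2.1, by
      obtain ⟨⟨r, hr0, hr1⟩, ⟨s, hs0, hs1⟩⟩ := p
      constructor <;> nlinarith⟩,
   ⟨p.1.1 * (1 - p.2.1) / (1 - p.1.1 * p.2.1), by
      obtain ⟨⟨r, hr0, hr1⟩, ⟨s, hs0, hs1⟩⟩ := p
      have h1 : (0:ℝ) < 1 - r * s := by nlinarith
      constructor
      · apply div_pos (by nlinarith) h1
      · rw [div_lt_one h1]; nlinarith⟩⟩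

/-- `v × 1 : (0,1)³ → (0,1)³`. -/
noncomputable def giryVL (x : UI × UI × UI) : UI × UI × UI :=
  ((giryV (x.1, x.2.1)).1, (giryV (x.1, x.2.1)).2, x.2.2)

/-- `1 × σ : (0,1)³ → (0,1)³`, where `σ(x,y) = (y,x)`. -/
def girySW (x : UI × UI × UI) : UI × UI × UI := (x.1, x.2.2, x.2.1)

/-- `1 × v : (0,1)³ → (0,1)³`. -/
noncomputable def giryVR (x : UI × UI × UI) : UI × UI × UI := (x.1, giryV (x.2.1, x.2.2))

/-- The map `v(r,s) = (rs, r(1−s)/(1−rs))` makes `(0,1)` a tricocycloid in the cartesian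
symmetric monoidal category of sets: `(v×1)∘(1×σ)∘(v×1) = (1×v)∘(v×1)∘(1×v)`, and both
sides send `(r,s,t)` to `(rst, rs(1−t)/(1−rst), r(1−s)/(1−rs))`. -/
theorem giry_tricocycloid (r s t : UI) :
    (giryVL ∘ girySW ∘ giryVL) (r, s, t) = (giryVR ∘ giryVL ∘ giryVR) (r, s, t) ∧
    (((giryVL ∘ girySW ∘ giryVL) (r, s, t)).1.1 = r.1 * s.1 * t.1 ∧
      ((giryVL ∘ girySW ∘ giryVL) (r, s, t)).2.1.1
        = r.1 * s.1 * (1 - t.1) / (1 - r.1 * s.1 * t.1) ∧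
      ((giryVL ∘ girySW ∘ giryVL) (r, s, t)).2.2.1 = r.1 * (1 - s.1) / (1 - r.1 * s.1)) ∧
    (((giryVR ∘ giryVL ∘ giryVR) (r, s, t)).1.1 = r.1 * s.1 * t.1 ∧
      ((giryVR ∘ giryVL ∘ giryVR) (r, s, t)).2.1.1
        = r.1 * s.1 * (1 - t.1) / (1 - r.1 * s.1 * t.1) ∧
      ((giryVR ∘ giryVL ∘ giryVR) (r, s, t)).2.2.1 = r.1 * (1 - s.1) / (1 - r.1 * s.1)) := by
  obtain ⟨r, hr0, hr1⟩ := r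
  obtain ⟨s, hs0, hs1⟩ := s
  obtain ⟨t, ht0, ht1⟩ := t
  have hrs : (1:ℝ) - r * s ≠ 0 := by nlinarith
  have hst : (1:ℝ) - s * t ≠ 0 := by nlinarith
  have hrst : (1:ℝ) - r * s * t ≠ 0 := by nlinarith [mul_pos hr0 hs0, mul_pos hs0 ht0]
  have hrst' : (1:ℝ) - r * (s * t) ≠ 0 := by rw [← mul_assoc]; exact hrst
  have e1 : r * (1 - s * t) / (1 - r * (s * t)) * (s * (1 - t) / (1 - s * t))
      = r * s * (1 - t) / (1 - r * s * t) := by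
    field_simp
  have e3 : r * (1 - s * t) / (1 - r * (s * t)) * (1 - s * (1 - t) / (1 - s * t))
      = r * (1 - s) / (1 - r * s * t) := by
    field_simp
    ring
  have e4 : (1:ℝ) - r * s * (1 - t) / (1 - r * s * t) = (1 - r * s) / (1 - r * s * t) := by
    field_simp
    ring
  have e2 : r * (1 - s * t) / (1 - r * (s * t)) * (1 - s * (1 - t) / (1 - s * t)) /
      (1 - r * (1 - s * t) / (1 - r * (s * t)) * (s * (1 - t) / (1 - s * t)))
      = r * (1 - s) / (1 - r * s) := by
    rw [e1, e3, e4]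
    rw [div_div_div_cancel_right₀]
    exact hrst
  refine ⟨?_, ⟨rfl, rfl, rfl⟩, ⟨?_, ?_, ?_⟩⟩
  · refine Prod.ext (Subtype.ext ?_) (Prod.ext (Subtype.ext ?_) (Subtype.ext ?_))
    · show r * s * t = r * (s * t); ring
    · show r * s * (1 - t) / (1 - r * s * t)
        = r * (1 - s * t) / (1 - r * (s * t)) * (s * (1 - t) / (1 - s * t))
      exact e1.symm
    · show r * (1 - s) / (1 - r * s)
        = r * (1 - s * t) / (1 - r * (s * t)) * (1 - s * (1 - t) / (1 - s * t)) /
          (1 - r * (1 - s * t) / (1 - r * (s * t)) * (s * (1 - t) / (1 - s * t)))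
      exact e2.symm
  · show r * (s * t) = r * s * t; ring
  · show r * (1 - s * t) / (1 - r * (s * t)) * (s * (1 - t) / (1 - s * t))
      = r * s * (1 - t) / (1 - r * s * t)
    exact e1
  · show r * (1 - s * t) / (1 - r * (s * t)) * (1 - s * (1 - t) / (1 - s * t)) /
        (1 - r * (1 - s * t) / (1 - r * (s * t)) * (s * (1 - t) / (1 - s * t)))
      = r * (1 - s) / (1 - r * s)
    exact e2
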